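/- Let G be a finite simple graph with nonempty vertex set V. Define the bipartite graph G' whose vertex set consists of five disjoint copies A1, A2, A3, A4, A5 of V (writing a_{i,u} for the copy of u ∈ V in A_i), with left part A1 ∪ A2 ∪ A3 and right part A4 ∪ A5, and whose edges are: a_{1,u} ~ a_{4,u} for every u; a_{3,u} ~ a_{5,u} for every u; a_{2,u} ~ a_{4,v} whenever u ~_G v; a_{2,u} ~ a_{5,v} whenever u = v or u ~_G v; and no other edges. Then 2 · (min over nonempty D ⊆ V of |D ∪ Odd_G(D)|) = min over nonempty D' ⊆ A1 ∪ A2 ∪ A3 with Odd_{G'}(D') = ∅ of |D'|. -/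

import Mathlib

open Finset

open Classical in
/-- The odd-neighbourhood of `D` in `G`: vertices having an odd number of neighbours in `D`. -/
noncomputable def oddNbhd {V : Type*} [Fintype V] (G : SimpleGraph V) (D : Finset V) :
    Finset V :=
  Finset.univ.filter fun v => Odd ((D.filter fun u => G.Adj v u).card)

/-- The bipartite gadget graph `G'` on five copies of `V` (copy `i` of `u ∈ V` is `(i, u)`;
`A1, …, A5` correspond to indices `0, …, 4`): edges are `a_{1,u} ~ a_{4,u}`,
`a_{3,u} ~ a_{5,u}`, `a_{2,u} ~ a_{4,v}` whenever `u ~_G v`, and `a_{2,u} ~ a_{5,v}` whenever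
`u = v` or `u ~_G v`. -/
def gadget {V : Type*} (G : SimpleGraph V) : SimpleGraph (Fin 5 × V) :=
  SimpleGraph.fromRel fun x y =>
    (x.1 = 0 ∧ y.1 = 3 ∧ x.2 = y.2) ∨
    (x.1 = 2 ∧ y.1 = 4 ∧ x.2 = y.2) ∨
    (x.1 = 1 ∧ y.1 = 3 ∧ G.Adj x.2 y.2) ∨
    (x.1 = 1 ∧ y.1 = 4 ∧ (x.2 = y.2 ∨ G.Adj x.2 y.2))

/-!
Split a set `S` in the left part into its layers `X ⊆ A1`, `D ⊆ A2`, `Y ⊆ A3`. Left vertices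
have no neighbours in `S`; the vertex `a_{4,v}` sees `[v ∈ X] + |N(v) ∩ D|` of them and `a_{5,v}`
sees `[v ∈ Y] + [v ∈ D] + |N(v) ∩ D|`. So `Odd_{G'}(S) = ∅` exactly when `X = Odd_G(D)` and
`Y = D ∆ Odd_G(D)`, and then `|S| = |Odd_G(D)| + |D| + |D ∆ Odd_G(D)| = 2 |D ∪ Odd_G(D)|`, with
`S ≠ ∅` iff `D ≠ ∅`. The sizes on the right are thus exactly the doubles of those on the left.
-/

open scoped symmDiff

section Layers

variable {ι V : Type*} [Fintype V]

def layer [DecidableEq ι] [DecidableEq V] (S : Finset (ι × V)) (i : ι) : Finset V :=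
  univ.filter fun u => (i, u) ∈ S

@[simp]
lemma mem_layer [DecidableEq ι] [DecidableEq V] {S : Finset (ι × V)} {i : ι} {u : V} :
    u ∈ layer S i ↔ (i, u) ∈ S := by
  simp [layer]

def ofLayers [Fintype ι] [DecidableEq V] (s : ι → Finset V) : Finset (ι × V) :=
  univ.filter fun x => x.2 ∈ s x.1

@[simp]
lemma mem_ofLayers [Fintype ι] [DecidableEq V] {s : ι → Finset V} {x : ι × V} :
    x ∈ ofLayers s ↔ x.2 ∈ s x.1 := by
  simp [ofLayers]

@[simp]
lemma layer_ofLayers [Fintype ι] [DecidableEq ι] [DecidableEq V] (s : ι → Finset V) :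
    layer (ofLayers s) = s := by
  ext i u
  simp

lemma layer_filter [DecidableEq ι] [DecidableEq V] (S : Finset (ι × V)) (p : ι × V → Prop)
    [DecidablePred p] (i : ι) :
    layer (S.filter p) i = (layer S i).filter fun u => p (i, u) := by
  ext u
  simp

lemma card_eq_sum_card_layer [Fintype ι] [DecidableEq ι] [DecidableEq V] (S : Finset (ι × V)) :
    #S = ∑ i, #(layer S i) := by
  rw [card_eq_sum_card_fiberwise (f := Prod.fst) (t := univ) fun _ _ => mem_univ _]
  refine sum_congr rfl fun i _ => card_nbij' Prod.snd (Prod.mk i) ?_ ?_ ?_ ?_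
  · rintro ⟨j, u⟩ h
    obtain ⟨h, rfl⟩ := mem_filter.1 h
    simpa using h
  · intro u h
    simp_all
  · rintro ⟨j, u⟩ h
    simp_all
  · intro u _
    rfl

end Layers

lemma even_ite_add_iff (p : Prop) [Decidable p] (n : ℕ) :
    Even ((if p then 1 else 0) + n) ↔ (p ↔ Odd n) := by
  by_cases hp : p <;> simp [hp, add_comm 1, Nat.even_add_one]

lemma card_add_card_add_card_symmDiff {α : Type*} [DecidableEq α] (s t : Finset α) :
    #s + #t + #(s ∆ t) = 2 * #(s ∪ t) := by
  have hsub : s ∩ t ⊆ s ∪ t := inter_subset_left.trans subset_union_left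
  rw [symmDiff_eq_sup_sdiff_inf, sup_eq_union, inf_eq_inter, card_sdiff_of_subset hsub,
    ← card_union_add_card_inter s t]
  have := card_le_card hsub
  omega

section Gadget

variable {V : Type*} (G : SimpleGraph V)

lemma gadget_adj_three_iff (v : V) (x : Fin 5 × V) :
    (gadget G).Adj (3, v) x ↔ x.1 = 0 ∧ x.2 = v ∨ x.1 = 1 ∧ G.Adj v x.2 := by
  obtain ⟨i, u⟩ := x
  simp only [gadget, SimpleGraph.fromRel_adj, ne_eq, Prod.mk.injEq]
  fin_cases i <;> simp [G.adj_comm, eq_comm]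

lemma gadget_adj_four_iff (v : V) (x : Fin 5 × V) :
    (gadget G).Adj (4, v) x ↔ x.1 = 2 ∧ x.2 = v ∨ x.1 = 1 ∧ (x.2 = v ∨ G.Adj v x.2) := by
  obtain ⟨i, u⟩ := x
  simp only [gadget, SimpleGraph.fromRel_adj, ne_eq, Prod.mk.injEq]
  fin_cases i <;> simp [G.adj_comm, eq_comm]

lemma gadget_not_adj_of_left {x y : Fin 5 × V} (hx : x.1 = 0 ∨ x.1 = 1 ∨ x.1 = 2)
    (hy : y.1 = 0 ∨ y.1 = 1 ∨ y.1 = 2) : ¬ (gadget G).Adj x y := by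
  obtain ⟨i, u⟩ := x
  obtain ⟨j, w⟩ := y
  simp only at hx hy
  rcases hx with rfl | rfl | rfl <;> rcases hy with rfl | rfl | rfl <;> simp [gadget]

end Gadget

open Classical in
lemma mem_oddNbhd {V : Type*} [Fintype V] (G : SimpleGraph V) {D : Finset V} {v : V} :
    v ∈ oddNbhd G D ↔ Odd #(D.filter (G.Adj v)) := by
  simp [oddNbhd]

open Classical in
lemma oddNbhd_eq_empty_iff {V : Type*} [Fintype V] (G : SimpleGraph V) (D : Finset V) :
    oddNbhd G D = ∅ ↔ ∀ v, Even #(D.filter (G.Adj v)) := by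
  simp [oddNbhd, filter_eq_empty_iff]

@[simp]
lemma oddNbhd_empty {V : Type*} [Fintype V] (G : SimpleGraph V) : oddNbhd G ∅ = ∅ := by
  simp [oddNbhd]

section GadgetParity

open Classical

variable {V : Type*} [Fintype V] [DecidableEq V] (G : SimpleGraph V)

lemma card_filter_gadget_adj_three (S : Finset (Fin 5 × V)) (v : V) :
    #(S.filter ((gadget G).Adj (3, v))) =
      (if v ∈ layer S 0 then 1 else 0) + #((layer S 1).filter (G.Adj v)) := by
  rw [card_eq_sum_card_layer, Fin.sum_univ_five]
  simp only [layer_filter, gadget_adj_three_iff]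
  simp [filter_eq', apply_ite card]

lemma card_filter_gadget_adj_four (S : Finset (Fin 5 × V)) (v : V) :
    #(S.filter ((gadget G).Adj (4, v))) = (if v ∈ layer S 2 then 1 else 0) +
      ((if v ∈ layer S 1 then 1 else 0) + #((layer S 1).filter (G.Adj v))) := by
  rw [card_eq_sum_card_layer, Fin.sum_univ_five]
  simp only [layer_filter, gadget_adj_four_iff]
  have hv : v ∉ (layer S 1).filter (G.Adj v) := by simp
  by_cases h1 : (1, v) ∈ S <;> simp [filter_or, filter_eq', apply_ite card, h1, hv] <;> ring

end GadgetParity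

section GadgetEvenSets

open Classical

variable {V : Type*} [Fintype V] [DecidableEq V] (G : SimpleGraph V)

lemma oddNbhd_gadget_eq_empty_iff {S : Finset (Fin 5 × V)}
    (hS : ∀ x ∈ S, x.1 = 0 ∨ x.1 = 1 ∨ x.1 = 2) :
    oddNbhd (gadget G) S = ∅ ↔
      layer S 0 = oddNbhd G (layer S 1) ∧ layer S 2 = layer S 1 ∆ oddNbhd G (layer S 1) := by
  have even_three (v : V) : Even #(S.filter ((gadget G).Adj (3, v))) ↔
      (v ∈ layer S 0 ↔ v ∈ oddNbhd G (layer S 1)) := by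
    rw [card_filter_gadget_adj_three, even_ite_add_iff, mem_oddNbhd]
  have even_four (v : V) : Even #(S.filter ((gadget G).Adj (4, v))) ↔
      (v ∈ layer S 2 ↔ v ∈ layer S 1 ∆ oddNbhd G (layer S 1)) := by
    rw [card_filter_gadget_adj_four, even_ite_add_iff, ← Nat.not_even_iff_odd, even_ite_add_iff,
      mem_symmDiff, mem_oddNbhd]
    tauto
  have even_left (x : Fin 5 × V) (hx : x.1 = 0 ∨ x.1 = 1 ∨ x.1 = 2) :
      Even #(S.filter ((gadget G).Adj x)) := by
    rw [filter_false_of_mem fun y hy => gadget_not_adj_of_left G hx (hS y hy)]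
    simp
  rw [oddNbhd_eq_empty_iff, Finset.ext_iff, Finset.ext_iff, ← forall_and]
  simp_rw [← even_three, ← even_four]
  refine ⟨fun h v => ⟨h _, h _⟩, fun h => ?_⟩
  rintro ⟨i, v⟩
  fin_cases i
  · exact even_left _ (Or.inl rfl)
  · exact even_left _ (Or.inr (Or.inl rfl))
  · exact even_left _ (Or.inr (Or.inr rfl))
  · exact (h v).1
  · exact (h v).2

lemma card_eq_card_layers_of_left {S : Finset (Fin 5 × V)} (hS : ∀ x ∈ S, x.1 = 0 ∨ x.1 = 1 ∨ x.1 = 2) :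
    #S = #(layer S 0) + #(layer S 1) + #(layer S 2) := by
  have h3 : layer S 3 = ∅ := eq_empty_of_forall_notMem fun u hu => by
    simpa using hS _ (mem_layer.1 hu)
  have h4 : layer S 4 = ∅ := eq_empty_of_forall_notMem fun u hu => by
    simpa using hS _ (mem_layer.1 hu)
  rw [card_eq_sum_card_layer, Fin.sum_univ_five, h3, h4, card_empty, add_zero, add_zero]

lemma exists_gadget_even_set {D : Finset V} (hD : D.Nonempty) :
    ∃ S : Finset (Fin 5 × V), S.Nonempty ∧ (∀ x ∈ S, x.1 = 0 ∨ x.1 = 1 ∨ x.1 = 2) ∧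
      oddNbhd (gadget G) S = ∅ ∧ #S = 2 * #(D ∪ oddNbhd G D) := by
  set S := ofLayers ![oddNbhd G D, D, D ∆ oddNbhd G D, ∅, ∅]
  have hS : ∀ x ∈ S, x.1 = 0 ∨ x.1 = 1 ∨ x.1 = 2 := by
    rintro ⟨i, u⟩ h
    fin_cases i <;> simp_all [S]
  obtain ⟨v, hv⟩ := hD
  refine ⟨S, ⟨(1, v), by simpa [S]⟩, hS, (oddNbhd_gadget_eq_empty_iff G hS).2 ?_, ?_⟩
  · simp [S]
  · rw [card_eq_card_layers_of_left hS, ← card_add_card_add_card_symmDiff]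
    simp [S, add_comm]

lemma exists_nonempty_of_gadget_even_set {S : Finset (Fin 5 × V)} (hne : S.Nonempty)
    (hS : ∀ x ∈ S, x.1 = 0 ∨ x.1 = 1 ∨ x.1 = 2) (hodd : oddNbhd (gadget G) S = ∅) :
    ∃ D : Finset V, D.Nonempty ∧ 2 * #(D ∪ oddNbhd G D) = #S := by
  obtain ⟨h0, h2⟩ := (oddNbhd_gadget_eq_empty_iff G hS).1 hodd
  have hcard : #S = 2 * #(layer S 1 ∪ oddNbhd G (layer S 1)) := by
    rw [card_eq_card_layers_of_left hS, h0, h2, ← card_add_card_add_card_symmDiff, add_comm #(oddNbhd _ _)]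
  refine ⟨layer S 1, nonempty_iff_ne_empty.2 fun h => ?_, hcard.symm⟩
  rw [h, oddNbhd_empty, union_empty, card_empty] at hcard
  exact hne.ne_empty (card_eq_zero.1 hcard)

end GadgetEvenSets

theorem gadget_even_set_general {V : Type*} [Fintype V] [DecidableEq V]
    (G : SimpleGraph V) :
    2 * sInf {m : ℕ | ∃ D : Finset V, D.Nonempty ∧ (D ∪ oddNbhd G D).card = m} =
      sInf {m : ℕ | ∃ D' : Finset (Fin 5 × V), D'.Nonempty ∧
        (∀ x ∈ D', x.1 = 0 ∨ x.1 = 1 ∨ x.1 = 2) ∧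
        oddNbhd (gadget G) D' = ∅ ∧ D'.card = m} := by
  set sizes := {m : ℕ | ∃ D : Finset V, D.Nonempty ∧ (D ∪ oddNbhd G D).card = m}
  have hsizes : {m : ℕ | ∃ D' : Finset (Fin 5 × V), D'.Nonempty ∧
      (∀ x ∈ D', x.1 = 0 ∨ x.1 = 1 ∨ x.1 = 2) ∧ oddNbhd (gadget G) D' = ∅ ∧ D'.card = m} =
      (2 * ·) '' sizes := by
    ext m
    constructor
    · rintro ⟨S, hne, hS, hodd, rfl⟩
      obtain ⟨D, hD, hcard⟩ := exists_nonempty_of_gadget_even_set G hne hS hodd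
      exact ⟨_, ⟨D, hD, rfl⟩, hcard⟩
    · rintro ⟨_, ⟨D, hD, rfl⟩, rfl⟩
      exact exists_gadget_even_set G hD
  rw [hsizes]
  rcases sizes.eq_empty_or_nonempty with h | h
  · rw [h, Set.image_empty, Nat.sInf_empty]
  · exact Monotone.map_csInf (fun _ _ hab => Nat.mul_le_mul_left 2 hab) h

/-- Twice the minimum of `|D ∪ Odd_G(D)|` over nonempty `D ⊆ V` equals the minimum size of a
nonempty `D' ⊆ A1 ∪ A2 ∪ A3` (the left part of the gadget graph `G'`) with
`Odd_{G'}(D') = ∅`. -/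
theorem gadget_even_set {V : Type*} [Fintype V] [DecidableEq V] [Nonempty V]
    (G : SimpleGraph V) :
    2 * sInf {m : ℕ | ∃ D : Finset V, D.Nonempty ∧ (D ∪ oddNbhd G D).card = m} =
      sInf {m : ℕ | ∃ D' : Finset (Fin 5 × V), D'.Nonempty ∧
        (∀ x ∈ D', x.1 = 0 ∨ x.1 = 1 ∨ x.1 = 2) ∧
        oddNbhd (gadget G) D' = ∅ ∧ D'.card = m} :=
  gadget_even_set_general G
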